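/- arXiv:1307.5230 — 8 statements merged into one kernel-verified Lean document; each statement's English description precedes it below -/
import Mathlib

section
/- If every target is covered by exactly two sensors (F_i = 2 for all i), then there exist two disjoint set covers of the universe if and only if the intersection graph R (whose vertices are the sensors, with an edge between two sensors iff they share a target) is properly 2-colorable; moreover, in a proper 2-coloring, each color class is a set cover. -/
/-- The intersection graph of an indexed family of sensors: vertices are sensors,
with an edge between two distinct sensors iff they share a target. -/
def interGraph {ι α : Type*} [DecidableEq α] (S : ι → Finset α) : SimpleGraph ι where
  Adj i j := i ≠ j ∧ ((S i) ∩ (S j)).Nonempty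
  symm := by
    constructor
    intro i j h
    exact ⟨h.1.symm, by rw [Finset.inter_comm]; exact h.2⟩
  loopless := by constructor; intro i h; exact h.1 rfl

/-!
Every target lies in exactly two sensors, which are adjacent in the intersection graph. So a
proper 2-coloring gives each target one sensor of each color, and both color classes are covers.
Conversely, if `C₁` and `C₂` are disjoint covers, the two sensors of a target must be split
between them, so coloring by membership in `C₁` is proper.
-/

open Finset

lemma Fin.two_eq_or_eq_of_ne {a b : Fin 2} (hab : a ≠ b) (c : Fin 2) : c = a ∨ c = b := by
  omega

section

variable {ι α : Type*} [DecidableEq α] {S : ι → Finset α} {x : α}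

lemma interGraph_adj_of_mem {i j : ι} (hij : i ≠ j) (hi : x ∈ S i) (hj : x ∈ S j) :
    (interGraph S).Adj i j :=
  ⟨hij, x, mem_inter.2 ⟨hi, hj⟩⟩

variable [Fintype ι]

lemma exists_color_mem_of_one_lt_card {f : ι → Fin 2}
    (hf : ∀ i j, (interGraph S).Adj i j → f i ≠ f j) (hx : 1 < #{i | x ∈ S i}) (c : Fin 2) :
    ∃ i, f i = c ∧ x ∈ S i := by
  obtain ⟨a, ha, b, hb, hab⟩ := one_lt_card.1 hx
  replace ha := (mem_filter.1 ha).2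
  replace hb := (mem_filter.1 hb).2
  rcases Fin.two_eq_or_eq_of_ne (hf a b (interGraph_adj_of_mem hab ha hb)) c with rfl | rfl
  exacts [⟨a, rfl, ha⟩, ⟨b, rfl, hb⟩]

lemma eq_or_eq_of_card_le_two {i j k : ι} (hij : i ≠ j) (hi : x ∈ S i) (hj : x ∈ S j)
    (hk : x ∈ S k) (hx : #{i | x ∈ S i} ≤ 2) : k = i ∨ k = j := by
  by_contra! hne
  refine hx.not_gt (two_lt_card.2 ⟨i, ?_, j, ?_, k, ?_, hij, hne.1.symm, hne.2.symm⟩) <;>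
    simpa

lemma mem_iff_notMem_of_disjoint_covers {U : Finset α} (hsub : ∀ i, S i ⊆ U)
    (hfreq : ∀ x ∈ U, #{i | x ∈ S i} ≤ 2) {C₁ C₂ : Finset ι} (hC : Disjoint C₁ C₂)
    (h₁ : ∀ x ∈ U, ∃ i ∈ C₁, x ∈ S i) (h₂ : ∀ x ∈ U, ∃ i ∈ C₂, x ∈ S i) {i j : ι}
    (hadj : (interGraph S).Adj i j) : i ∈ C₁ ↔ j ∉ C₁ := by
  obtain ⟨hij, x, hx⟩ := hadj
  obtain ⟨hi, hj⟩ := mem_inter.1 hx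
  have hxU := hsub i hi
  obtain ⟨k, hk₁, hk⟩ := h₁ x hxU
  obtain ⟨l, hl₂, hl⟩ := h₂ x hxU
  have hl₁ : l ∉ C₁ := disjoint_right.1 hC hl₂
  rcases eq_or_eq_of_card_le_two hij hi hj hk (hfreq x hxU) with rfl | rfl <;>
    rcases eq_or_eq_of_card_le_two hij hi hj hl (hfreq x hxU) with rfl | rfl <;>
    tauto

end

theorem stmt0_general {ι α : Type*} [Fintype ι] [DecidableEq ι] [DecidableEq α]
    (U : Finset α) (S : ι → Finset α)
    (hsub : ∀ i, S i ⊆ U)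
    (hfreq : ∀ x ∈ U, (Finset.univ.filter (fun i => x ∈ S i)).card = 2) :
    ((∃ C₁ C₂ : Finset ι, Disjoint C₁ C₂ ∧
        (∀ x ∈ U, ∃ i ∈ C₁, x ∈ S i) ∧ (∀ x ∈ U, ∃ i ∈ C₂, x ∈ S i)) ↔
      ∃ f : ι → Fin 2, ∀ i j, (interGraph S).Adj i j → f i ≠ f j) ∧
    (∀ f : ι → Fin 2, (∀ i j, (interGraph S).Adj i j → f i ≠ f j) →
      ∀ c : Fin 2, ∀ x ∈ U, ∃ i, f i = c ∧ x ∈ S i) := by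
  have hcover : ∀ f : ι → Fin 2, (∀ i j, (interGraph S).Adj i j → f i ≠ f j) →
      ∀ c : Fin 2, ∀ x ∈ U, ∃ i, f i = c ∧ x ∈ S i := fun f hf c x hx =>
    exists_color_mem_of_one_lt_card hf (by rw [hfreq x hx]; decide) c
  refine ⟨⟨fun ⟨C₁, C₂, hC, h₁, h₂⟩ => ?_, fun ⟨f, hf⟩ => ?_⟩, hcover⟩
  · refine ⟨fun i => if i ∈ C₁ then 0 else 1, fun i j hadj => ?_⟩
    have := mem_iff_notMem_of_disjoint_covers hsub (fun x hx => (hfreq x hx).le) hC h₁ h₂ hadj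
    dsimp only
    split_ifs <;> simp_all
  · have hclass (c : Fin 2) (x : α) (hx : x ∈ U) : ∃ i ∈ ({i | f i = c} : Finset ι), x ∈ S i := by
      obtain ⟨i, hi, hxi⟩ := hcover f hf c x hx
      exact ⟨i, by simpa using hi, hxi⟩
    exact ⟨_, _, disjoint_filter.2 fun i _ h => by simp [h], hclass 0, hclass 1⟩

/-- If every target is covered by exactly two sensors, then two disjoint set covers
exist iff the intersection graph `R` is properly 2-colorable; moreover in any proper
2-coloring each color class is a set cover. -/
theorem stmt0 {ι α : Type*} [Fintype ι] [DecidableEq ι] [DecidableEq α]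
    (U : Finset α) (hU : U.Nonempty) (S : ι → Finset α)
    (hsub : ∀ i, S i ⊆ U)
    (hfreq : ∀ x ∈ U, (Finset.univ.filter (fun i => x ∈ S i)).card = 2) :
    ((∃ C₁ C₂ : Finset ι, Disjoint C₁ C₂ ∧
        (∀ x ∈ U, ∃ i ∈ C₁, x ∈ S i) ∧ (∀ x ∈ U, ∃ i ∈ C₂, x ∈ S i)) ↔
      ∃ f : ι → Fin 2, ∀ i j, (interGraph S).Adj i j → f i ≠ f j) ∧
    (∀ f : ι → Fin 2, (∀ i j, (interGraph S).Adj i j → f i ≠ f j) →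
      ∀ c : Fin 2, ∀ x ∈ U, ∃ i, f i = c ∧ x ∈ S i) :=
  stmt0_general U S hsub hfreq
end

section
/- If each of C_p and C_q is a set cover of the universe U using subsets from S ∪ T, where T is the collection of all singletons of U, and C_p, C_q are disjoint, then (C_p ∪ C_q) \ T is a set cover of U using only subsets from S. -/
/-! A point `x` of `U` lies in some `A ∈ C_p` and some `B ∈ C_q`. If both were singletons they would
both be `{x}`, contradicting `C_p ∩ C_q = ∅`; so one of them survives the removal of `T`.
The only property of `T` this uses is that its members are pairwise disjoint. -/

namespace Finset

variable {α : Type*} [DecidableEq α]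

theorem pairwiseDisjoint_image_singleton (U : Finset α) :
    ((U.image singleton : Finset (Finset α)) : Set (Finset α)).PairwiseDisjoint id := by
  rintro _ ha _ hb hab
  obtain ⟨a, -, rfl⟩ := mem_image.mp ha
  obtain ⟨b, -, rfl⟩ := mem_image.mp hb
  exact disjoint_singleton.mpr fun h => hab (h ▸ rfl)

theorem exists_mem_union_sdiff_of_disjoint {T Cp Cq : Finset (Finset α)}
    (hT : (T : Set (Finset α)).PairwiseDisjoint id) (hdisj : Disjoint Cp Cq) {x : α}
    (hp : ∃ A ∈ Cp, x ∈ A) (hq : ∃ B ∈ Cq, x ∈ B) : ∃ A ∈ (Cp ∪ Cq) \ T, x ∈ A := by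
  obtain ⟨A, hA, hxA⟩ := hp
  obtain ⟨B, hB, hxB⟩ := hq
  by_cases hAT : A ∈ T
  · by_cases hBT : B ∈ T
    · have hAB : A = B := hT.elim_finset hAT hBT x hxA hxB
      exact absurd (hAB ▸ hB) (disjoint_left.mp hdisj hA)
    · exact ⟨B, mem_sdiff.mpr ⟨mem_union_right _ hB, hBT⟩, hxB⟩
  · exact ⟨A, mem_sdiff.mpr ⟨mem_union_left _ hA, hAT⟩, hxA⟩

end Finset

/-- If `C_p` and `C_q` are disjoint set covers of `U` from `S ∪ T`, where `T` is the
family of singletons of `U`, then `(C_p ∪ C_q) \ T` is a set cover of `U` using only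
subsets from `S`. -/
theorem stmt1 {α : Type*} [DecidableEq α] (U : Finset α) (S : Finset (Finset α))
    (T : Finset (Finset α)) (hT : T = U.image (fun x => {x}))
    (Cp Cq : Finset (Finset α))
    (hCp : Cp ⊆ S ∪ T) (hCq : Cq ⊆ S ∪ T)
    (hcovp : ∀ x ∈ U, ∃ A ∈ Cp, x ∈ A)
    (hcovq : ∀ x ∈ U, ∃ A ∈ Cq, x ∈ A)
    (hdisj : Disjoint Cp Cq) :
    (Cp ∪ Cq) \ T ⊆ S ∧ ∀ x ∈ U, ∃ A ∈ (Cp ∪ Cq) \ T, x ∈ A := by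
  have hsub : Cp ∪ Cq ⊆ T ∪ S := Finset.union_comm S T ▸ Finset.union_subset hCp hCq
  have hTdisj : (T : Set (Finset α)).PairwiseDisjoint id :=
    hT ▸ Finset.pairwiseDisjoint_image_singleton U
  exact ⟨sdiff_le_iff.mpr hsub, fun x hx =>
    Finset.exists_mem_union_sdiff_of_disjoint hTdisj hdisj (hcovp x hx) (hcovq x hx)⟩
end

section
/- Let each of |S| vertices of a hypergraph with n hyperedges be colored independently and uniformly at random with one of ℓ colors, where ℓ = F_min / ln(n ln n), F_min being the minimum hyperedge size. Then for any hyperedge e and color c, the probability that e contains no vertex of color c is less than 1/(n ln n), and consequently the expected number of colors missing from at least one hyperedge is at most ℓ / ln n. -/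
/-!
The colorings of `V` avoiding `c` on `e` are exactly the products of `{c}ᶜ` over `e` and of all
colors elsewhere, so `e` misses `c` with probability `(1 - 1/ℓ)^|e| < exp (-|e|/ℓ)`, which is
below `1/(n ln n)` as soon as `|e| ≥ ℓ ln (n ln n)`. A union bound over the `n` hyperedges, summed
over the `ℓ` colors, bounds the expected number of missing colors by `ℓ n / (n ln n) = ℓ / ln n`.
-/

open Finset

section Colorings

variable {V α : Type*} [Fintype V] [DecidableEq V] [Fintype α] [DecidableEq α]

def avoidingColorings (e : Finset V) (c : α) : Finset (V → α) :=
  univ.filter fun f => ∀ v ∈ e, f v ≠ c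

lemma avoidingColorings_eq_piFinset (e : Finset V) (c : α) :
    avoidingColorings e c = Fintype.piFinset fun v => if v ∈ e then {c}ᶜ else univ := by
  ext f
  simp only [avoidingColorings, mem_filter, mem_univ, true_and, Fintype.mem_piFinset]
  refine forall_congr' fun v => ?_
  by_cases hv : v ∈ e <;> simp [hv]

lemma card_avoidingColorings (e : Finset V) (c : α) :
    #(avoidingColorings e c)
      = (Fintype.card α - 1) ^ #e * Fintype.card α ^ (Fintype.card V - #e) := by
  simp only [avoidingColorings_eq_piFinset, Fintype.card_piFinset, apply_ite card, card_compl,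
    card_singleton, card_univ]
  rw [prod_ite, prod_const, prod_const, filter_mem_eq_inter, univ_inter, filter_not,
    filter_mem_eq_inter, univ_inter, card_sdiff_of_subset (subset_univ e), card_univ]

lemma card_avoidingColorings_div [Nonempty α] (e : Finset V) (c : α) :
    (#(avoidingColorings e c) : ℝ) / (Fintype.card α : ℝ) ^ Fintype.card V
      = (1 - (Fintype.card α : ℝ)⁻¹) ^ #e := by
  have hα : (0 : ℝ) < Fintype.card α := by exact_mod_cast Fintype.card_pos
  have hsplit : (Fintype.card α : ℝ) ^ Fintype.card V
      = (Fintype.card α : ℝ) ^ #e * (Fintype.card α : ℝ) ^ (Fintype.card V - #e) := by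
    rw [← pow_add, Nat.add_sub_cancel' (card_le_univ e)]
  rw [card_avoidingColorings, hsplit, Nat.cast_mul, Nat.cast_pow, Nat.cast_pow,
    Nat.cast_sub Fintype.card_pos, mul_div_mul_right _ _ (by positivity), ← div_pow, sub_div,
    div_self hα.ne', Nat.cast_one, one_div]

end Colorings

lemma card_filter_exists_mem_le {ι β : Type*} [Fintype ι] (E : Finset β) (P : ι → β → Prop)
    [∀ f e, Decidable (P f e)] :
    #(univ.filter fun f => ∃ e ∈ E, P f e) ≤ ∑ e ∈ E, #(univ.filter fun f => P f e) := by
  classical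
  refine (card_le_card fun f hf => ?_).trans card_biUnion_le
  obtain ⟨e, he, hfe⟩ := (mem_filter.mp hf).2
  exact mem_biUnion.mpr ⟨e, he, mem_filter.mpr ⟨mem_univ f, hfe⟩⟩

lemma sum_card_filter_exists_mem_le {ι κ β : Type*} [Fintype ι] [Fintype κ] (E : Finset β)
    (P : ι → κ → β → Prop) [∀ f c e, Decidable (P f c e)] :
    ∑ f, #(univ.filter fun c => ∃ e ∈ E, P f c e)
      ≤ ∑ c, ∑ e ∈ E, #(univ.filter fun f => P f c e) := by
  refine (sum_card_bipartiteAbove_eq_sum_card_bipartiteBelow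
    (fun f c => ∃ e ∈ E, P f c e) (s := univ) (t := univ)).trans_le ?_
  exact sum_le_sum fun c _ => card_filter_exists_mem_le E (P · c)

lemma one_sub_inv_pow_lt_inv {t x : ℝ} {k : ℕ} (ht : 1 ≤ t) (hx : 1 < x)
    (hk : t * Real.log x ≤ k) : (1 - t⁻¹) ^ k < x⁻¹ := by
  have ht0 : 0 < t := by linarith
  have hk0 : k ≠ 0 := by
    rintro rfl
    have := mul_pos ht0 (Real.log_pos hx)
    push_cast at hk
    linarith
  have hbase : 1 - t⁻¹ < Real.exp (-t⁻¹) := by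
    linarith [Real.add_one_lt_exp (neg_ne_zero.mpr (inv_ne_zero ht0.ne'))]
  calc (1 - t⁻¹) ^ k < Real.exp (-t⁻¹) ^ k :=
        pow_lt_pow_left₀ hbase (sub_nonneg.mpr (inv_le_one_of_one_le₀ ht)) hk0
    _ = Real.exp (-(k / t)) := by rw [← Real.exp_nat_mul]; ring_nf
    _ ≤ Real.exp (-Real.log x) := by
        gcongr
        rwa [le_div_iff₀ ht0, mul_comm]
    _ = x⁻¹ := by rw [Real.exp_neg, Real.exp_log (by linarith)]

lemma one_lt_mul_log {n : ℕ} (hn : 2 ≤ n) : 1 < (n : ℝ) * Real.log n := by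
  have h2 : (2 : ℝ) ≤ n := by exact_mod_cast hn
  have hlog : Real.log 2 ≤ Real.log n := Real.log_le_log (by norm_num) h2
  nlinarith [Real.log_two_gt_d9]

open Finset in
/-- Color each of the vertices independently and uniformly at random with one of `ℓ`
colors, where `ℓ ≤ F_min / ln (n ln n)`.  Then for any hyperedge `e` and color `c`, the
probability that `e` contains no vertex of color `c` is less than `1/(n ln n)`, and the
expected number of colors missing from at least one hyperedge is at most `ℓ / ln n`. -/
theorem stmt3 {V : Type*} [Fintype V] [DecidableEq V]
    (E : Finset (Finset V)) (n Fmin ℓ : ℕ)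
    (hn : E.card = n) (hn2 : 2 ≤ n) (hℓ1 : 1 ≤ ℓ)
    (hF : ∀ e ∈ E, Fmin ≤ e.card)
    (hℓ : (ℓ : ℝ) ≤ (Fmin : ℝ) / Real.log (n * Real.log n)) :
    (∀ e ∈ E, ∀ c : Fin ℓ,
      ((Finset.univ.filter (fun f : V → Fin ℓ => ∀ v ∈ e, f v ≠ c)).card : ℝ) /
        (ℓ : ℝ) ^ Fintype.card V < 1 / (n * Real.log n)) ∧
    (∑ f : V → Fin ℓ,
        ((Finset.univ.filter (fun c : Fin ℓ => ∃ e ∈ E, ∀ v ∈ e, f v ≠ c)).card : ℝ)) /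
      (ℓ : ℝ) ^ Fintype.card V ≤ (ℓ : ℝ) / Real.log n := by
  have : NeZero ℓ := ⟨by omega⟩
  have hnl := one_lt_mul_log hn2
  have hmiss : ∀ e ∈ E, ∀ c : Fin ℓ,
      (#(avoidingColorings e c) : ℝ) / (ℓ : ℝ) ^ Fintype.card V < 1 / (n * Real.log n) := by
    intro e he c
    have hk : (ℓ : ℝ) * Real.log (n * Real.log n) ≤ #e :=
      ((le_div_iff₀ (Real.log_pos hnl)).mp hℓ).trans (by exact_mod_cast hF e he)
    have hprob := card_avoidingColorings_div e c
    rw [Fintype.card_fin] at hprob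
    rw [hprob, one_div]
    exact one_sub_inv_pow_lt_inv (by exact_mod_cast hℓ1) hnl hk
  refine ⟨hmiss, ?_⟩
  have hunion := sum_card_filter_exists_mem_le E fun (f : V → Fin ℓ) c (e : Finset V) =>
    ∀ v ∈ e, f v ≠ c
  calc _ ≤ (∑ c : Fin ℓ, ∑ e ∈ E, (#(avoidingColorings e c) : ℝ))
          / (ℓ : ℝ) ^ Fintype.card V := by
        gcongr
        exact_mod_cast hunion
    _ = ∑ c : Fin ℓ, ∑ e ∈ E, (#(avoidingColorings e c) : ℝ) / (ℓ : ℝ) ^ Fintype.card V := by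
        simp only [sum_div]
    _ ≤ ∑ _c : Fin ℓ, ∑ _e ∈ E, 1 / ((n : ℝ) * Real.log n) :=
        sum_le_sum fun c _ => sum_le_sum fun e he => (hmiss e he c).le
    _ = ℓ / Real.log n := by
        have : (n : ℝ) ≠ 0 := by positivity
        simp only [sum_const, card_univ, Fintype.card_fin, hn, nsmul_eq_mul]
        field_simp
end

section
/- Every hypergraph in which every hyperedge has at least F_min vertices admits a vertex coloring with at least ℓ − ⌊ℓ/ln n⌋ colors such that each of these colors appears in every hyperedge, where ℓ = ⌊F_min / ln(n ln n)⌋ and n ≥ 2 is the number of hyperedges. (Existence via the probabilistic method: the expected number of 'invalid' colors is less than ℓ/ln n.) -/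
/-!
Colour the vertices uniformly at random with `ℓ` colours. A fixed colour misses a fixed edge `e`
with probability `(1 - 1/ℓ)^|e| ≤ exp(-F_min/ℓ) ≤ 1/(n ln n)`, the last step being exactly the
choice of `ℓ`. By the union bound the expected number of colours missing some edge is at most
`ℓ · n / (n ln n) = ℓ / ln n`, so some colouring misses at most that many. The expectation is
computed by counting all colourings of the finitely many vertices lying on edges.
-/

open Finset Fintype Real

theorem sub_one_pow_mul_pow_sub_le {k : ℝ} (hk : 1 ≤ k) {m a N : ℕ} (hma : m ≤ a) (haN : a ≤ N) :
    (k - 1) ^ a * k ^ (N - a) ≤ k ^ N * (1 - k⁻¹) ^ m := by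
  have hsplit : (k - 1) ^ a * k ^ (N - a) = k ^ N * (1 - k⁻¹) ^ a := by
    rw [← Nat.add_sub_cancel' haN, pow_add, Nat.add_sub_cancel_left, mul_right_comm, ← mul_pow]
    field_simp
  rw [hsplit]
  refine mul_le_mul_of_nonneg_left (pow_le_pow_of_le_one ?_ ?_ hma) (by positivity)
  · exact sub_nonneg.mpr (inv_le_one_of_one_le₀ hk)
  · exact sub_le_self _ (by positivity)

section Colorings

variable {V W α : Type*} [Fintype α] [DecidableEq α]

def missingColors (E : Finset (Finset V)) (f : V → α) : Finset α :=
  {c | ∃ e ∈ E, ∀ v ∈ e, f v ≠ c}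

@[simp]
theorem mem_missingColors {E : Finset (Finset V)} {f : V → α} {c : α} :
    c ∈ missingColors E f ↔ ∃ e ∈ E, ∀ v ∈ e, f v ≠ c := by
  simp [missingColors]

theorem notMem_missingColors {E : Finset (Finset V)} {f : V → α} {c : α} :
    c ∉ missingColors E f ↔ ∀ e ∈ E, ∃ v ∈ e, f v = c := by
  simp [missingColors]

variable [Fintype W] [DecidableEq W]

theorem card_filter_forall_mem_ne (e : Finset W) (c : α) :
    #{g : W → α | ∀ v ∈ e, g v ≠ c} = (card α - 1) ^ #e * card α ^ (card W - #e) := by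
  have : ({g : W → α | ∀ v ∈ e, g v ≠ c} : Finset _) =
      piFinset fun v => if v ∈ e then univ.erase c else univ := by
    ext g
    simp only [mem_filter, mem_univ, true_and, mem_piFinset]
    refine forall_congr' fun v => ?_
    split_ifs with hv <;> simp [hv]
  rw [this, card_piFinset]
  simp only [apply_ite Finset.card, card_erase_of_mem (mem_univ c), card_univ]
  rw [prod_ite, prod_const, prod_const, filter_mem_eq_inter, univ_inter, filter_not,
    card_sdiff_of_subset (subset_univ _), card_univ]
  simp

theorem sum_card_missingColors_le (E : Finset (Finset W)) :
    ∑ g : W → α, #(missingColors E g) ≤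
      card α * ∑ e ∈ E, (card α - 1) ^ #e * card α ^ (card W - #e) := by
  calc ∑ g : W → α, #(missingColors E g)
      = ∑ g : W → α, #{c | c ∈ missingColors E g} := by simp only [filter_univ_mem]
    _ = ∑ c : α, #{g : W → α | c ∈ missingColors E g} :=
        sum_card_bipartiteAbove_eq_sum_card_bipartiteBelow _
    _ ≤ ∑ c : α, #(E.biUnion fun e => {g : W → α | ∀ v ∈ e, g v ≠ c}) :=
        sum_le_sum fun c _ => card_le_card fun g => by simp
    _ ≤ ∑ c : α, ∑ e ∈ E, #{g : W → α | ∀ v ∈ e, g v ≠ c} :=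
        sum_le_sum fun c _ => card_biUnion_le
    _ = _ := by simp only [card_filter_forall_mem_ne, sum_const, card_univ, smul_eq_mul]

theorem Fintype.exists_card_missingColors_le [Nonempty α] (E : Finset (Finset W)) (m : ℕ)
    (hE : ∀ e ∈ E, m ≤ #e) :
    ∃ g : W → α, (#(missingColors E g) : ℝ) ≤ card α * #E * (1 - (card α : ℝ)⁻¹) ^ m := by
  have hk : 1 ≤ card α := Fintype.card_pos
  have hk' : (1 : ℝ) ≤ card α := by exact_mod_cast hk
  have hsum : ∑ g : W → α, (#(missingColors E g) : ℝ) ≤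
      ∑ _g : W → α, (card α * #E * (1 - (card α : ℝ)⁻¹) ^ m : ℝ) := by
    calc ∑ g : W → α, (#(missingColors E g) : ℝ)
        ≤ card α * ∑ e ∈ E, ((card α - 1 : ℝ) ^ #e * (card α : ℝ) ^ (card W - #e)) := by
          have := sum_card_missingColors_le (α := α) E
          exact_mod_cast this
      _ ≤ card α * ∑ e ∈ E, (card α : ℝ) ^ card W * (1 - (card α : ℝ)⁻¹) ^ m := by
          refine mul_le_mul_of_nonneg_left (sum_le_sum fun e he => ?_) (by positivity)
          exact sub_one_pow_mul_pow_sub_le hk' (hE e he) (card_le_univ e)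
      _ = ∑ _g : W → α, (card α * #E * (1 - (card α : ℝ)⁻¹) ^ m : ℝ) := by
          simp only [sum_const, card_univ, card_fun, nsmul_eq_mul]
          push_cast
          ring
  obtain ⟨g, -, hg⟩ := exists_le_of_sum_le univ_nonempty hsum
  exact ⟨g, hg⟩

theorem exists_coloring_card_missingColors_le [Nonempty α] (E : Finset (Finset V)) (m : ℕ)
    (hE : ∀ e ∈ E, m ≤ #e) :
    ∃ f : V → α, (#(missingColors E f) : ℝ) ≤ card α * #E * (1 - (card α : ℝ)⁻¹) ^ m := by
  classical
  set U := E.sup id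
  have hU : ∀ e ∈ E, e ⊆ U := fun e he => le_sup (f := id) he
  set E' : Finset (Finset U) := E.image (Finset.subtype (· ∈ U))
  have hE' : ∀ e' ∈ E', m ≤ #e' := by
    simp only [E', mem_image, forall_exists_index, and_imp]
    rintro _ e he rfl
    rw [card_subtype, filter_true_of_mem (hU e he)]
    exact hE e he
  obtain ⟨g, hg⟩ := Fintype.exists_card_missingColors_le (α := α) E' m hE'
  let f : V → α := fun v => if h : v ∈ U then g ⟨v, h⟩ else Classical.arbitrary α
  have hsub : missingColors E f ⊆ missingColors E' g := by
    intro c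
    simp only [mem_missingColors, E', mem_image]
    rintro ⟨e, he, hc⟩
    refine ⟨_, ⟨e, he, rfl⟩, fun w hw => ?_⟩
    simpa [f, w.2] using hc w (mem_subtype.mp hw)
  refine ⟨f, ?_⟩
  calc (#(missingColors E f) : ℝ) ≤ #(missingColors E' g) := by exact_mod_cast card_le_card hsub
    _ ≤ card α * #E' * (1 - (card α : ℝ)⁻¹) ^ m := hg
    _ ≤ card α * #E * (1 - (card α : ℝ)⁻¹) ^ m := by
      have hk : (1 : ℝ) ≤ card α := by exact_mod_cast Fintype.card_pos
      gcongr
      · exact pow_nonneg (sub_nonneg.mpr (inv_le_one_of_one_le₀ hk)) m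
      · exact card_image_le

end Colorings

theorem one_sub_inv_pow_le_exp_neg_div {k : ℝ} (hk : 1 ≤ k) (m : ℕ) :
    (1 - k⁻¹) ^ m ≤ exp (-(m / k)) :=
  calc (1 - k⁻¹) ^ m ≤ exp (-k⁻¹) ^ m :=
        pow_le_pow_left₀ (sub_nonneg.mpr (inv_le_one_of_one_le₀ hk))
          (by linarith [add_one_le_exp (-k⁻¹)]) m
    _ = exp (-(m / k)) := by rw [← exp_nat_mul]; ring_nf

theorem le_div_natFloor_div {F L : ℝ} (hF : 0 ≤ F) (hL : 0 < L) (h : 0 < ⌊F / L⌋₊) :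
    L ≤ F / ⌊F / L⌋₊ := by
  rw [le_div_iff₀ (by exact_mod_cast h), mul_comm, ← le_div_iff₀ hL]
  exact Nat.floor_le (by positivity)

theorem one_sub_inv_pow_le_inv_mul_log {n F ℓ : ℕ} (hn : 2 ≤ n)
    (hℓ : ℓ = ⌊(F : ℝ) / log (n * log n)⌋₊) (hℓ1 : 1 ≤ ℓ) :
    (1 - (ℓ : ℝ)⁻¹) ^ F ≤ (n * log n)⁻¹ := by
  have hn' : (2 : ℝ) ≤ n := by exact_mod_cast hn
  have hlog : log 2 ≤ log n := log_le_log two_pos hn'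
  have hnlog : 1 < (n : ℝ) * log n := by nlinarith [log_two_gt_d9]
  have hL : log (n * log n) ≤ F / ℓ := by
    subst hℓ
    exact le_div_natFloor_div F.cast_nonneg (log_pos hnlog) hℓ1
  calc (1 - (ℓ : ℝ)⁻¹) ^ F ≤ exp (-(F / ℓ)) :=
        one_sub_inv_pow_le_exp_neg_div (by exact_mod_cast hℓ1) F
    _ ≤ exp (-log (n * log n)) := exp_le_exp.mpr (neg_le_neg hL)
    _ = (n * log n)⁻¹ := by rw [exp_neg, exp_log (by linarith)]

/-- Every hypergraph with `n ≥ 2` hyperedges, each of size at least `F_min`, admits a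
vertex coloring with `ℓ = ⌊F_min / ln(n ln n)⌋` colors in which at least
`ℓ − ⌊ℓ/ln n⌋` of the colors appear in every hyperedge. -/
theorem stmt4 {V : Type*} (E : Finset (Finset V)) (n Fmin ℓ : ℕ)
    (hn : E.card = n) (hn2 : 2 ≤ n)
    (hF : ∀ e ∈ E, Fmin ≤ e.card)
    (hℓdef : ℓ = ⌊(Fmin : ℝ) / Real.log (n * Real.log n)⌋₊)
    (hℓ1 : 1 ≤ ℓ) :
    ∃ (f : V → Fin ℓ) (good : Finset (Fin ℓ)),
      ℓ - ⌊(ℓ : ℝ) / Real.log n⌋₊ ≤ good.card ∧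
      ∀ c ∈ good, ∀ e ∈ E, ∃ v ∈ e, f v = c := by
  have : Nonempty (Fin ℓ) := ⟨⟨0, hℓ1⟩⟩
  obtain ⟨f, hf⟩ := exists_coloring_card_missingColors_le (α := Fin ℓ) E Fmin hF
  have hlog : 0 < log n := log_pos (by exact_mod_cast hn2)
  have hmissing : #(missingColors E f) ≤ ⌊(ℓ : ℝ) / log n⌋₊ := by
    refine Nat.le_floor ?_
    calc (#(missingColors E f) : ℝ) ≤ ℓ * n * (1 - (ℓ : ℝ)⁻¹) ^ Fmin := by
          simpa [hn] using hf
      _ ≤ ℓ * n * (n * log n)⁻¹ := by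
          gcongr
          exact one_sub_inv_pow_le_inv_mul_log hn2 hℓdef hℓ1
      _ = ℓ / log n := by field_simp
  refine ⟨f, univ \ missingColors E f, ?_, fun c hc e he => ?_⟩
  · rw [card_univ_sdiff, Fintype.card_fin]
    omega
  · exact notMem_missingColors.mp (mem_sdiff.mp hc).2 e he
end

section
/- Let a hypergraph have hyperedges of size at least F_min, and suppose each hyperedge intersects at most Δ other hyperedges. If the vertices are colored independently and uniformly at random with ℓ = ⌊F_min / ln(e·F_min·Δ)⌋ colors (ℓ ≥ 1, F_min·Δ ≥ 1), then by the Lovász Local Lemma there is a positive probability that every color appears in every hyperedge; hence a polychromatic coloring with ℓ colors exists, and equivalently ℓ disjoint set covers exist. -/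
/-!
Colour the vertices uniformly at random with `ℓ` colours and let `A (e, c)` be the event that the
hyperedge `e` misses the colour `c`. Then `P (A (e, c)) ≤ (1 - 1/ℓ) ^ F_min ≤ exp (-F_min / ℓ)`,
which is at most `1 / (e F_min Δ)` by the choice of `ℓ`. The event `A (e, c)` is mutually
independent of all `A (e', c')` with `e'` disjoint from `e`, and fewer than `(Δ + 1) ℓ` events
remain; for `ℓ ≥ 2` the choice of `ℓ` also gives `(Δ + 1) ℓ ≤ F_min Δ` (for `ℓ = 1` no colour
can be missed). So the symmetric Lovász Local Lemma applies; on the uniform space of colourings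
it is a statement about cardinalities. The colour classes of a polychromatic colouring are the
disjoint set covers.
-/

open Finset Real

namespace LocalLemma

variable {I Ω : Type*} [Fintype Ω] [DecidableEq Ω] (bad : I → Finset Ω)

def avoiding (T : Finset I) : Finset Ω := {ω | ∀ j ∈ T, ω ∉ bad j}

@[simp]
lemma mem_avoiding {T : Finset I} {ω : Ω} : ω ∈ avoiding bad T ↔ ∀ j ∈ T, ω ∉ bad j := by
  simp [avoiding]

@[simp]
lemma avoiding_empty : avoiding bad (∅ : Finset I) = univ := by
  ext; simp

lemma avoiding_anti {T T' : Finset I} (h : T ⊆ T') : avoiding bad T' ⊆ avoiding bad T :=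
  fun _ hω => (mem_avoiding bad).2 fun j hj => (mem_avoiding bad).1 hω j (h hj)

lemma card_avoiding_insert_add [DecidableEq I] (j : I) (T : Finset I) :
    #(avoiding bad (insert j T)) + #(bad j ∩ avoiding bad T) = #(avoiding bad T) := by
  have : avoiding bad (insert j T) = avoiding bad T \ bad j := by
    ext; simp [and_comm]
  rw [this, inter_comm]
  exact card_sdiff_add_card_inter _ _

variable {bad} {x : ℝ}

lemma pow_card_mul_card_avoiding_le_card_avoiding_union [DecidableEq I] (hx : x ≤ 1)
    {S U : Finset I} (hSU : Disjoint S U)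
    (h : ∀ j ∈ U, ∀ W ⊆ S ∪ U, j ∉ W → (#(bad j ∩ avoiding bad W) : ℝ) ≤ x * #(avoiding bad W)) :
    (1 - x) ^ #U * #(avoiding bad S) ≤ #(avoiding bad (S ∪ U)) := by
  induction U using Finset.induction_on with
  | empty => simp
  | insert j U hjU ih =>
    have hjS : j ∉ S := disjoint_right.1 hSU (mem_insert_self j U)
    have hsub : S ∪ U ⊆ S ∪ insert j U := union_subset_union_right (subset_insert j U)
    have ih' := ih (disjoint_of_subset_right (subset_insert j U) hSU)
      fun k hk W hW => h k (mem_insert_of_mem hk) W (hW.trans hsub)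
    have hj := h j (mem_insert_self j U) (S ∪ U) hsub (by simp [hjS, hjU])
    have hsplit : (#(avoiding bad (insert j (S ∪ U))) : ℝ) + #(bad j ∩ avoiding bad (S ∪ U))
        = #(avoiding bad (S ∪ U)) := by exact_mod_cast card_avoiding_insert_add bad j (S ∪ U)
    rw [union_insert, card_insert_of_notMem hjU, pow_succ']
    calc (1 - x) * (1 - x) ^ #U * #(avoiding bad S)
        ≤ (1 - x) * #(avoiding bad (S ∪ U)) := by
          rw [mul_assoc]; exact mul_le_mul_of_nonneg_left ih' (by linarith)
      _ ≤ #(avoiding bad (insert j (S ∪ U))) := by linarith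

variable {N : I → Finset I} {d : ℕ}

theorem card_inter_avoiding_le [Nonempty Ω] (hx0 : 0 ≤ x) (hx1 : x ≤ 1)
    (hN : ∀ i, #(N i) ≤ d)
    (hbad : ∀ i, (#(bad i) : ℝ) ≤ x * (1 - x) ^ d * Fintype.card Ω)
    (hind : ∀ i T, i ∉ T → Disjoint T (N i) →
      #(bad i ∩ avoiding bad T) * Fintype.card Ω = #(bad i) * #(avoiding bad T))
    (T : Finset I) {i : I} (hi : i ∉ T) :
    (#(bad i ∩ avoiding bad T) : ℝ) ≤ x * #(avoiding bad T) := by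
  induction T using Finset.strongInduction generalizing i with
  | H T ih =>
  classical
  -- `bad i` is independent of the events `far` from it, and the events `near` it shrink
  -- `avoiding bad far` by at most the factor `(1 - x) ^ d`
  set near := T.filter (· ∈ N i)
  set far := T.filter (· ∉ N i)
  have hfar : far ⊆ T := filter_subset _ _
  have hT : far ∪ near = T := by rw [union_comm]; exact filter_union_filter_not_eq _ _
  have hlower : (1 - x) ^ #near * #(avoiding bad far) ≤ #(avoiding bad T) := by
    rw [← hT]
    refine pow_card_mul_card_avoiding_le_card_avoiding_union hx1
      (disjoint_filter_filter_not T T (· ∈ N i)).symm fun j hj W hW hjW => ih W ?_ hjW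
    rw [hT] at hW
    exact hW.ssubset_of_ne fun h => hjW (h ▸ (filter_subset _ _) hj)
  have hnear : (1 - x) ^ d ≤ (1 - x) ^ #near :=
    pow_le_pow_of_le_one (by linarith) (by linarith)
      ((card_le_card fun j hj => (mem_filter.1 hj).2).trans (hN i))
  have hindep : (#(bad i ∩ avoiding bad far) : ℝ) * Fintype.card Ω
      = #(bad i) * #(avoiding bad far) := by
    exact_mod_cast hind i far (fun h => hi (hfar h))
      (disjoint_left.2 fun j hj => (mem_filter.1 hj).2)
  have hΩ : (0 : ℝ) < Fintype.card Ω := by exact_mod_cast Fintype.card_pos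
  have hfar_bound : (#(bad i ∩ avoiding bad far) : ℝ) ≤ x * (1 - x) ^ d * #(avoiding bad far) := by
    refine le_of_mul_le_mul_right ?_ hΩ
    rw [hindep]
    nlinarith [hbad i, (Nat.cast_nonneg #(avoiding bad far) : (0 : ℝ) ≤ _)]
  have hmono : #(bad i ∩ avoiding bad T) ≤ #(bad i ∩ avoiding bad far) :=
    card_le_card (inter_subset_inter_left (avoiding_anti bad hfar))
  calc (#(bad i ∩ avoiding bad T) : ℝ) ≤ #(bad i ∩ avoiding bad far) := by exact_mod_cast hmono
    _ ≤ x * ((1 - x) ^ d * #(avoiding bad far)) := by linarith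
    _ ≤ x * #(avoiding bad T) := by
      gcongr
      exact (mul_le_mul_of_nonneg_right hnear (Nat.cast_nonneg _)).trans hlower

theorem pow_card_mul_card_le_card_avoiding [Nonempty Ω] (hx0 : 0 ≤ x) (hx1 : x ≤ 1)
    (hN : ∀ i, #(N i) ≤ d)
    (hbad : ∀ i, (#(bad i) : ℝ) ≤ x * (1 - x) ^ d * Fintype.card Ω)
    (hind : ∀ i T, i ∉ T → Disjoint T (N i) →
      #(bad i ∩ avoiding bad T) * Fintype.card Ω = #(bad i) * #(avoiding bad T))
    (T : Finset I) :
    (1 - x) ^ #T * Fintype.card Ω ≤ #(avoiding bad T) := by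
  classical
  simpa using pow_card_mul_card_avoiding_le_card_avoiding_union hx1 (disjoint_empty_left T)
    fun j _ W _ hjW => card_inter_avoiding_le hx0 hx1 hN hbad hind W hjW

lemma inv_exp_one_mul_le (d : ℕ) :
    (exp 1 * (d + 1))⁻¹ ≤ ((d : ℝ) + 2)⁻¹ * (1 - ((d : ℝ) + 2)⁻¹) ^ d := by
  have he : (1 + ((d + 1 : ℕ) : ℝ)⁻¹) ^ (d + 1) ≤ exp 1 := one_add_inv_pow_le_exp
  have hy : 1 + ((d + 1 : ℕ) : ℝ)⁻¹ = ((d : ℝ) + 2) / (d + 1) := by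
    push_cast; field_simp; ring
  have hrw : ((d : ℝ) + 2)⁻¹ * (1 - ((d : ℝ) + 2)⁻¹) ^ d
      = ((d + 1) * (1 + ((d + 1 : ℕ) : ℝ)⁻¹) ^ (d + 1))⁻¹ := by
    have h1 : 1 - ((d : ℝ) + 2)⁻¹ = (d + 1) / (d + 2) := by field_simp; ring
    rw [hy, h1, div_pow, div_pow, pow_succ, pow_succ]
    field_simp
  rw [hrw, mul_comm (exp 1)]
  gcongr

theorem avoiding_nonempty [Nonempty Ω] (hN : ∀ i, #(N i) ≤ d)
    (hbad : ∀ i, exp 1 * #(bad i) * (d + 1) ≤ Fintype.card Ω)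
    (hind : ∀ i T, i ∉ T → Disjoint T (N i) →
      #(bad i ∩ avoiding bad T) * Fintype.card Ω = #(bad i) * #(avoiding bad T))
    (T : Finset I) : (avoiding bad T).Nonempty := by
  -- `x = 1 / (d + 2)` rather than the usual `1 / (d + 1)`, so that `x < 1` also when `d = 0`
  set x : ℝ := ((d : ℝ) + 2)⁻¹
  have hx0 : 0 < x := by positivity
  have hx1 : x < 1 := inv_lt_one_of_one_lt₀ (by linarith [(Nat.cast_nonneg d : (0 : ℝ) ≤ d)])
  have hbad' (i : I) : (#(bad i) : ℝ) ≤ x * (1 - x) ^ d * Fintype.card Ω := by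
    have hpos : (0 : ℝ) < exp 1 * (d + 1) := by positivity
    calc (#(bad i) : ℝ) ≤ (exp 1 * (d + 1))⁻¹ * Fintype.card Ω := by
          rw [inv_mul_eq_div, le_div_iff₀ hpos]; linarith [hbad i]
      _ ≤ x * (1 - x) ^ d * Fintype.card Ω := by gcongr; exact inv_exp_one_mul_le d
  have hlow := pow_card_mul_card_le_card_avoiding hx0.le hx1.le hN hbad' hind T
  have : (0 : ℝ) < (1 - x) ^ #T * Fintype.card Ω := by
    have : (0 : ℝ) < Fintype.card Ω := by exact_mod_cast Fintype.card_pos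
    have : 0 < 1 - x := by linarith
    positivity
  exact card_pos.1 (by exact_mod_cast this.trans_le hlow)

end LocalLemma

open LocalLemma

section Independence

variable {V K : Type*} [Fintype V] [DecidableEq V] [Fintype K] [DecidableEq K]

theorem card_inter_mul_card_eq_of_dependsOn {A B : Finset (V → K)} (S : Finset V)
    (hA : DependsOn (· ∈ A) (S : Set V)) (hB : DependsOn (· ∈ B) (S : Set V)ᶜ) :
    #(A ∩ B) * Fintype.card (V → K) = #A * #B := by
  have memA (f g : V → K) : S.piecewise f g ∈ A ↔ f ∈ A :=
    (hA fun v hv => S.piecewise_eq_of_mem f g hv).to_iff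
  have memB (f g : V → K) : S.piecewise f g ∈ B ↔ g ∈ B :=
    (hB fun v hv => S.piecewise_eq_of_notMem f g hv).to_iff
  -- `(A ∩ B) × Ω ≃ A × B` by exchanging the `S`-coordinates of the two colourings
  have swap (p : (V → K) × (V → K)) :
      (S.piecewise (S.piecewise p.1 p.2) (S.piecewise p.2 p.1),
        S.piecewise (S.piecewise p.2 p.1) (S.piecewise p.1 p.2)) = p := by
    simp [piecewise_same]
  rw [← card_univ, ← card_product, ← card_product]
  refine card_nbij' (fun p => (S.piecewise p.1 p.2, S.piecewise p.2 p.1))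
    (fun p => (S.piecewise p.1 p.2, S.piecewise p.2 p.1)) ?_ ?_ (fun p _ => swap p)
    (fun p _ => swap p)
  · rintro ⟨f, g⟩ h
    simp only [coe_product, Set.mem_prod, mem_coe, mem_inter] at h ⊢
    exact ⟨(memA f g).2 h.1.1, (memB g f).2 h.1.2⟩
  · rintro ⟨f, g⟩ h
    simp only [coe_product, Set.mem_prod, mem_coe, mem_inter, mem_univ, and_true] at h ⊢
    exact ⟨(memA f g).2 h.1, (memB f g).2 h.2⟩

lemma dependsOn_mem_avoiding {I : Type*} {bad : I → Finset (V → K)} {T : Finset I} {s : Set V}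
    (h : ∀ j ∈ T, DependsOn (· ∈ bad j) s) : DependsOn (· ∈ avoiding bad T) s := by
  intro f g hfg
  simp only [mem_avoiding, eq_iff_iff]
  exact forall₂_congr fun j hj => not_congr (h j hj hfg).to_iff

end Independence

def IsPolychromatic {V K : Type*} (E : Finset (Finset V)) (f : V → K) : Prop :=
  ∀ e ∈ E, ∀ c, ∃ v ∈ e, f v = c

lemma IsPolychromatic.exists_disjoint_covers {V K : Type*} [Fintype V] [DecidableEq K]
    {E : Finset (Finset V)} {f : V → K} (hf : IsPolychromatic E f) :
    ∃ C : K → Finset V, (∀ a b, a ≠ b → Disjoint (C a) (C b)) ∧ ∀ a, ∀ e ∈ E, ∃ v ∈ C a, v ∈ e := by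
  refine ⟨fun a => {v | f v = a}, fun a b hab => ?_, fun a e he => ?_⟩
  · exact disjoint_filter.2 fun v _ ha hb => hab (ha ▸ hb)
  · obtain ⟨v, hv, rfl⟩ := hf e he a
    exact ⟨v, by simp, hv⟩

section Neighbors

variable {V : Type*} [DecidableEq V] (E : Finset (Finset V)) (ℓ : ℕ)

def neighbors (p : E × Fin ℓ) : Finset (E × Fin ℓ) :=
  {q | q ≠ p ∧ ((p.1 : Finset V) ∩ q.1).Nonempty}

lemma card_neighbors_lt {Δ : ℕ}
    (hΔ : ∀ e ∈ E, #(E.filter (fun e' => e' ≠ e ∧ (e ∩ e').Nonempty)) ≤ Δ) (p : E × Fin ℓ) :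
    #(neighbors E ℓ p) < (Δ + 1) * ℓ := by
  set near := E.filter fun e' => e' ≠ (p.1 : Finset V) ∧ ((p.1 : Finset V) ∩ e').Nonempty
  have hmaps : Set.MapsTo (fun q : E × Fin ℓ => ((q.1 : Finset V), q.2))
      (insert p (neighbors E ℓ p) : Finset _)
      (insert (p.1 : Finset V) near ×ˢ (univ : Finset (Fin ℓ)) : Finset _) := by
    intro q hq
    simp only [coe_insert, Set.mem_insert_iff, mem_coe, neighbors, mem_filter, mem_univ,
      true_and] at hq
    simp only [coe_product, coe_insert, Set.mem_prod, Set.mem_insert_iff, mem_coe, near,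
      mem_filter, coe_univ, Set.mem_univ, and_true]
    rcases hq with rfl | ⟨-, hint⟩
    · exact Or.inl rfl
    · by_cases h : (q.1 : Finset V) = p.1
      · exact Or.inl h
      · exact Or.inr ⟨q.1.2, h, hint⟩
  have hinj : Set.InjOn (fun q : E × Fin ℓ => ((q.1 : Finset V), q.2))
      (insert p (neighbors E ℓ p) : Finset _) := by
    rintro ⟨⟨e, he⟩, c⟩ - ⟨⟨e', he'⟩, c'⟩ - h
    simp_all
  have hself : p ∉ neighbors E ℓ p := by simp [neighbors]
  have hcard := card_le_card_of_injOn _ hmaps hinj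
  rw [card_insert_of_notMem hself, card_product, card_univ, Fintype.card_fin] at hcard
  have hnear : #(insert (p.1 : Finset V) near) ≤ Δ + 1 :=
    (card_insert_le _ _).trans (Nat.add_le_add_right (hΔ p.1 p.1.2) 1)
  calc #(neighbors E ℓ p) < #(neighbors E ℓ p) + 1 := Nat.lt_succ_self _
    _ ≤ _ := hcard
    _ ≤ (Δ + 1) * ℓ := Nat.mul_le_mul_right ℓ hnear

end Neighbors

section Colourings

variable {V : Type*} [Fintype V] [DecidableEq V] {E : Finset (Finset V)} {ℓ : ℕ}

def missing (e : Finset V) (c : Fin ℓ) : Finset (V → Fin ℓ) := {f | ∀ v ∈ e, f v ≠ c}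

lemma dependsOn_mem_missing (e : Finset V) (c : Fin ℓ) :
    DependsOn (· ∈ missing e c) (e : Set V) := by
  intro f g hfg
  simp only [missing, mem_filter, mem_univ, true_and, eq_iff_iff]
  exact forall₂_congr fun v hv => by rw [hfg v hv]

lemma card_missing (e : Finset V) (c : Fin ℓ) :
    (#(missing e c) : ℝ) = (1 - (ℓ : ℝ)⁻¹) ^ #e * Fintype.card (V → Fin ℓ) := by
  have hℓ : (ℓ : ℝ) ≠ 0 := by exact_mod_cast c.pos.ne'
  have hpi : missing e c = Fintype.piFinset fun v => if v ∈ e then {c}ᶜ else univ := by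
    ext f
    simp only [missing, mem_filter, mem_univ, true_and, Fintype.mem_piFinset]
    refine forall_congr' fun v => ?_
    by_cases hv : v ∈ e <;> simp [hv]
  have hfactor (v : V) : (#(if v ∈ e then {c}ᶜ else univ : Finset (Fin ℓ)) : ℝ)
      = (if v ∈ e then 1 - (ℓ : ℝ)⁻¹ else 1) * ℓ := by
    by_cases hv : v ∈ e
    · simp [hv, card_compl, Nat.cast_sub c.pos, sub_mul, hℓ]
    · simp [hv]
  rw [hpi, Fintype.card_piFinset, Nat.cast_prod, Finset.prod_congr rfl fun v _ => hfactor v,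
    prod_mul_distrib, prod_ite_mem, univ_inter, prod_const, prod_const, card_univ,
    Fintype.card_fun, Fintype.card_fin, Nat.cast_pow]

lemma card_missing_inter_avoiding_mul {p : E × Fin ℓ} {T : Finset (E × Fin ℓ)} (hp : p ∉ T)
    (hT : Disjoint T (neighbors E ℓ p)) :
    #(missing (p.1 : Finset V) p.2 ∩ avoiding (fun q : E × Fin ℓ => missing (q.1 : Finset V) q.2) T)
        * Fintype.card (V → Fin ℓ)
      = #(missing (p.1 : Finset V) p.2)
        * #(avoiding (fun q : E × Fin ℓ => missing (q.1 : Finset V) q.2) T) := by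
  refine card_inter_mul_card_eq_of_dependsOn _ (dependsOn_mem_missing _ _)
    (dependsOn_mem_avoiding fun q hq => (dependsOn_mem_missing _ _).mono ?_)
  have hne : q ≠ p := fun h => hp (h ▸ hq)
  have hfar : ¬((p.1 : Finset V) ∩ q.1).Nonempty := fun h =>
    disjoint_left.1 hT hq (by simp [neighbors, hne, h])
  rw [not_nonempty_iff_eq_empty, ← disjoint_iff_inter_eq_empty] at hfar
  exact Set.subset_compl_iff_disjoint_left.2 (by exact_mod_cast hfar)

theorem exists_isPolychromatic {Fmin Δ : ℕ} (hF : ∀ e ∈ E, Fmin ≤ #e)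
    (hΔ : ∀ e ∈ E, #(E.filter (fun e' => e' ≠ e ∧ (e ∩ e').Nonempty)) ≤ Δ) (hℓ : 1 ≤ ℓ)
    (hLLL : exp 1 * (1 - (ℓ : ℝ)⁻¹) ^ Fmin * ((Δ + 1) * ℓ) ≤ 1) :
    ∃ f : V → Fin ℓ, IsPolychromatic E f := by
  have : Nonempty (V → Fin ℓ) := ⟨fun _ => ⟨0, hℓ⟩⟩
  have hd : (((Δ + 1) * ℓ - 1 : ℕ) : ℝ) + 1 = (Δ + 1) * ℓ := by
    exact_mod_cast Nat.sub_add_cancel (Nat.mul_pos Δ.succ_pos hℓ)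
  have hbad (p : E × Fin ℓ) : exp 1 * #(missing (p.1 : Finset V) p.2)
      * (((Δ + 1) * ℓ - 1 : ℕ) + 1) ≤ Fintype.card (V → Fin ℓ) := by
    have hpow : (1 - (ℓ : ℝ)⁻¹) ^ #(p.1 : Finset V) ≤ (1 - (ℓ : ℝ)⁻¹) ^ Fmin :=
      pow_le_pow_of_le_one (sub_nonneg.2 (inv_le_one_of_one_le₀ (by exact_mod_cast hℓ)))
        (by simp) (hF _ p.1.2)
    rw [hd, card_missing]
    calc exp 1 * ((1 - (ℓ : ℝ)⁻¹) ^ #(p.1 : Finset V) * Fintype.card (V → Fin ℓ))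
          * ((Δ + 1) * ℓ)
        = exp 1 * (1 - (ℓ : ℝ)⁻¹) ^ #(p.1 : Finset V) * ((Δ + 1) * ℓ)
          * Fintype.card (V → Fin ℓ) := by ring
      _ ≤ exp 1 * (1 - (ℓ : ℝ)⁻¹) ^ Fmin * ((Δ + 1) * ℓ) * Fintype.card (V → Fin ℓ) := by
          gcongr
      _ ≤ Fintype.card (V → Fin ℓ) := mul_le_of_le_one_left (Nat.cast_nonneg _) hLLL
  obtain ⟨f, hf⟩ := avoiding_nonempty (fun p => Nat.le_sub_one_of_lt (card_neighbors_lt E ℓ hΔ p))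
    hbad (fun p T hp hT => card_missing_inter_avoiding_mul hp hT) univ
  refine ⟨f, fun e he c => ?_⟩
  simpa [missing] using (mem_avoiding _).1 hf ⟨⟨e, he⟩, c⟩ (mem_univ _)

end Colourings

lemma log_exp_one_mul (t : ℝ) (ht : 0 < t) : log (exp 1 * t) = 1 + log t := by
  rw [log_mul (exp_pos 1).ne' ht.ne', log_exp]

lemma one_sub_inv_pow_le {F ℓ : ℕ} {t : ℝ} (ht : 0 < t) (hℓ : 0 < ℓ)
    (hℓF : ℓ * log (exp 1 * t) ≤ F) : (1 - (ℓ : ℝ)⁻¹) ^ F ≤ (exp 1 * t)⁻¹ := by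
  have hℓ' : (0 : ℝ) < ℓ := by exact_mod_cast hℓ
  calc (1 - (ℓ : ℝ)⁻¹) ^ F ≤ exp (-(ℓ : ℝ)⁻¹) ^ F := by
        gcongr
        · exact sub_nonneg.2 (inv_le_one_of_one_le₀ (by exact_mod_cast hℓ))
        · linarith [add_one_le_exp (-(ℓ : ℝ)⁻¹)]
    _ = exp (-(F / ℓ)) := by rw [← exp_nat_mul]; ring_nf
    _ ≤ exp (-log (exp 1 * t)) := by
        gcongr
        rwa [le_div_iff₀ hℓ', mul_comm]
    _ = (exp 1 * t)⁻¹ := by rw [exp_neg, exp_log (by positivity)]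

lemma add_one_mul_le {F Δ ℓ : ℕ} (hFΔ : 1 ≤ F * Δ) (hℓ : 2 ≤ ℓ)
    (hℓF : ℓ * log (exp 1 * F * Δ) ≤ F) : (Δ + 1) * ℓ ≤ F * Δ := by
  have hΔ : 1 ≤ Δ := Nat.pos_of_mul_pos_left hFΔ
  have hFt : F ≤ F * Δ := Nat.le_mul_of_pos_right F hΔ
  have hlog : ℓ * (1 + log (F * Δ : ℕ)) ≤ (F : ℝ) := by
    rw [← log_exp_one_mul _ (by exact_mod_cast hFΔ)]; push_cast; rwa [← mul_assoc]
  have hℓ' : (2 : ℝ) ≤ ℓ := by exact_mod_cast hℓ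
  -- `F ≥ 2 (1 + log (F Δ))` forces `F Δ ≥ 3 > e`, i.e. `log (F Δ) ≥ 1`
  have hF2 : 2 ≤ F := by
    have : 0 ≤ log (F * Δ : ℕ) := log_nonneg (by exact_mod_cast hFΔ)
    exact_mod_cast (show (2 : ℝ) ≤ F by nlinarith)
  have hF3 : 3 ≤ F := by
    have : 0 < log (F * Δ : ℕ) := log_pos (by exact_mod_cast (hF2.trans hFt))
    exact_mod_cast (show (2 : ℝ) < F by nlinarith)
  have hlog1 : 1 ≤ log (F * Δ : ℕ) := by
    rw [le_log_iff_exp_le (by exact_mod_cast hFΔ)]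
    have : (3 : ℝ) ≤ (F * Δ : ℕ) := by exact_mod_cast hF3.trans hFt
    linarith [exp_one_lt_d9]
  have h2ℓ : 2 * ℓ ≤ F := by exact_mod_cast (show (2 * ℓ : ℝ) ≤ F by nlinarith)
  nlinarith

lemma exp_one_mul_one_sub_inv_pow_mul_le {F Δ ℓ : ℕ} (hFΔ : 1 ≤ F * Δ) (hℓ : 1 ≤ ℓ)
    (hℓF : ℓ * log (exp 1 * F * Δ) ≤ F) :
    exp 1 * (1 - (ℓ : ℝ)⁻¹) ^ F * ((Δ + 1) * ℓ) ≤ 1 := by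
  rcases hℓ.eq_or_lt with rfl | hℓ2
  · simp [zero_pow (Nat.pos_of_mul_pos_right hFΔ).ne']
  have ht : (0 : ℝ) < F * Δ := by exact_mod_cast hFΔ
  have hmiss : (1 - (ℓ : ℝ)⁻¹) ^ F ≤ (exp 1 * (F * Δ))⁻¹ :=
    one_sub_inv_pow_le ht (by omega) (by rwa [← mul_assoc])
  have hdeg : ((Δ + 1) * ℓ : ℝ) ≤ F * Δ := by exact_mod_cast add_one_mul_le hFΔ hℓ2 hℓF
  calc exp 1 * (1 - (ℓ : ℝ)⁻¹) ^ F * ((Δ + 1) * ℓ)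
      ≤ exp 1 * (exp 1 * (F * Δ))⁻¹ * (F * Δ) := by gcongr
    _ = 1 := by field_simp; exact div_self ht.ne'

/-- Lovász Local Lemma application: if every hyperedge has at least `F_min` vertices,
each hyperedge intersects at most `Δ` others, `F_min·Δ ≥ 1`, and
`ℓ = ⌊F_min / ln(e·F_min·Δ)⌋ ≥ 1`, then a uniformly random `ℓ`-coloring makes every
color appear in every hyperedge with positive probability; hence a polychromatic
coloring with `ℓ` colors exists, and equivalently `ℓ` disjoint set covers
(transversal classes) exist. -/
theorem stmt6 {V : Type*} [Fintype V] [DecidableEq V]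
    (E : Finset (Finset V)) (Fmin Δ ℓ : ℕ)
    (hF : ∀ e ∈ E, Fmin ≤ e.card)
    (hΔ : ∀ e ∈ E, (E.filter (fun e' => e' ≠ e ∧ (e ∩ e').Nonempty)).card ≤ Δ)
    (hFΔ : 1 ≤ Fmin * Δ)
    (hℓdef : ℓ = ⌊(Fmin : ℝ) / Real.log (Real.exp 1 * Fmin * Δ)⌋₊)
    (hℓ1 : 1 ≤ ℓ) :
    0 < (Finset.univ.filter
        (fun f : V → Fin ℓ => ∀ e ∈ E, ∀ c : Fin ℓ, ∃ v ∈ e, f v = c)).card ∧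
    (∃ f : V → Fin ℓ, ∀ e ∈ E, ∀ c : Fin ℓ, ∃ v ∈ e, f v = c) ∧
    (∃ C : Fin ℓ → Finset V, (∀ a b, a ≠ b → Disjoint (C a) (C b)) ∧
      ∀ a, ∀ e ∈ E, ∃ v ∈ C a, v ∈ e) := by
  have hlog : 0 < log (exp 1 * Fmin * Δ) := by
    have : (1 : ℝ) ≤ Fmin * Δ := by exact_mod_cast hFΔ
    exact log_pos (by rw [mul_assoc]; nlinarith [add_one_lt_exp (one_ne_zero (α := ℝ))])
  have hℓF : ℓ * log (exp 1 * Fmin * Δ) ≤ Fmin := by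
    rw [hℓdef, ← le_div_iff₀ hlog]
    exact Nat.floor_le (by positivity)
  obtain ⟨f, hf⟩ := exists_isPolychromatic hF hΔ hℓ1
    (exp_one_mul_one_sub_inv_pow_mul_le hFΔ hℓ1 hℓF)
  exact ⟨card_pos.2 ⟨f, mem_filter.2 ⟨mem_univ f, hf⟩⟩, ⟨f, hf⟩, hf.exists_disjoint_covers⟩
end

section
/- In the 1-D construction, every directed path in the network N from source s to sink t corresponds to a set cover of U: if the path visits sensors S_{i_1}, …, S_{i_k} in order, then their union covers all elements from L(S_{i_1}) to R(S_{i_k}), where L(S_{i_1}) = 1 and R(S_{i_k}) = n. -/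
/-! A point `x ≥ L a` either lies in `[L a, R a]` or beyond `R a`; in the latter case it is
`≥ L b` for the next sensor `b` (by the neighbour condition if `x ≤ R b`, and because
`L b ≤ R b` otherwise), so the search moves on, and it stops by the last sensor at the latest. -/

namespace List

theorem Icc_head_getLast_subset_biUnion_Icc {ι α : Type*} [LinearOrder α] {L R : ι → α}
    (hLR : ∀ j, L j ≤ R j) {p : List ι}
    (hchain : p.IsChain fun a b =>
      ∀ x, L a ≤ x → x ≤ R b → x ∈ Set.Icc (L a) (R a) ∨ x ∈ Set.Icc (L b) (R b))
    (hp : p ≠ []) :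
    Set.Icc (L (p.head hp)) (R (p.getLast hp)) ⊆ ⋃ j ∈ p, Set.Icc (L j) (R j) := by
  induction p with
  | nil => contradiction
  | cons a rest ih =>
    cases rest with
    | nil => simp
    | cons b rest =>
      rintro x ⟨hax, hxlast⟩
      obtain ⟨hcov, hrest⟩ := isChain_cons_cons.mp hchain
      by_cases hxa : x ≤ R a
      · exact Set.mem_biUnion mem_cons_self ⟨hax, hxa⟩
      have hbx : L b ≤ x := by
        by_cases hxb : x ≤ R b
        · rcases hcov x hax hxb with h | h
          exacts [absurd h.2 hxa, h.1]
        · exact (hLR b).trans (le_of_not_ge hxb)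
      rw [getLast_cons_cons] at hxlast
      have hx := ih hrest (cons_ne_nil b rest) ⟨hbx, hxlast⟩
      simp only [Set.mem_iUnion] at hx ⊢
      obtain ⟨j, hj, hxj⟩ := hx
      exact ⟨j, mem_cons_of_mem a hj, hxj⟩

end List

/-- 1-D construction: sensors are intervals `[L j, R j] ⊆ {1,…,n}`.  If consecutive
sensors along a path are directed neighbors (`L a ≤ L b` and together they cover all
elements from `L a` to `R b`), the first sensor contains target `1` (edge from the
source `s`) and the last contains target `n` (edge to the sink `t`), then the sensors
on the path form a set cover of `{1,…,n}`. -/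
theorem stmt14 {ι : Type*} (n : ℕ) (L R : ι → ℕ)
    (hLR : ∀ j, 1 ≤ L j ∧ L j ≤ R j ∧ R j ≤ n)
    (p : List ι) (hp : p ≠ [])
    (hchain : p.Chain' (fun a b => L a ≤ L b ∧
      ∀ x, L a ≤ x → x ≤ R b → x ∈ Finset.Icc (L a) (R a) ∪ Finset.Icc (L b) (R b)))
    (hfirst : (1 : ℕ) ∈ Finset.Icc (L (p.head hp)) (R (p.head hp)))
    (hlast : n ∈ Finset.Icc (L (p.getLast hp)) (R (p.getLast hp))) :
    ∀ x ∈ Finset.Icc 1 n, ∃ j ∈ p, x ∈ Finset.Icc (L j) (R j) := by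
  intro x hx
  rw [Finset.mem_Icc] at hx hfirst hlast
  have hcover : p.IsChain fun a b =>
      ∀ x, L a ≤ x → x ≤ R b → x ∈ Set.Icc (L a) (R a) ∨ x ∈ Set.Icc (L b) (R b) :=
    hchain.imp fun a b hab x hax hxb => by
      simpa only [Finset.mem_union, Finset.mem_Icc, Set.mem_Icc] using hab.2 x hax hxb
  have hx' := p.Icc_head_getLast_subset_biUnion_Icc (fun j => (hLR j).2.1) hcover hp
    ⟨hfirst.1.trans hx.1, hx.2.trans hlast.2⟩
  simpa only [Set.mem_iUnion, Set.mem_Icc, Finset.mem_Icc, exists_prop] using hx'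
end

section
/- For interval sensors on a line (1-D case), the maximum achievable lifetime of the fractional MLCP equals the maximum number of pairwise disjoint set covers (DSCP); i.e., the MLCP LP has an integral optimal solution. -/
/-!
Both optimal values equal `K`, the minimum over the points `m` of the number of sensors
containing `m`. Any fractional schedule is bounded by the batteries of the sensors covering a
single point, so `K` bounds the MLCP. Conversely, `K` disjoint covers are peeled off greedily:
sweeping left to right, cover the first uncovered point by the sensor containing it whose left
endpoint is largest. A point lying in `d` of the chosen sensors is then contained in all sensors
through the frontier point at which the last of them was chosen, none of which were chosen
earlier, so its coverage drops by `d` but was at least `K + d`.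
-/

open Finset Function

namespace IntervalSensors

variable {ι : Type*} (L R : ι → ℕ)

def stabbed (A : Finset ι) (m : ℕ) : Finset ι :=
  {j ∈ A | m ∈ Icc (L j) (R j)}

def IsCover (n : ℕ) (C : Finset ι) : Prop :=
  ∀ m ∈ Icc 1 n, ∃ i ∈ C, m ∈ Icc (L i) (R i)

variable {L R} {n : ℕ}

theorem add_one_le_card_stabbed_of_forall_le_left {K p m : ℕ} {A : Finset ι} {j₀ : ι}
    (hA : ∀ m ∈ Icc 1 n, K + 1 ≤ #(stabbed L R A m)) (hp : p + 1 ∈ Icc 1 n)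
    (hmax : ∀ j ∈ stabbed L R A (p + 1), L j ≤ L j₀)
    (hm : m ∈ Icc 1 n) (hj₀m : m ∈ Icc (L j₀) (R j₀)) :
    K + 1 ≤ #(stabbed L R {j ∈ A | p < R j} m) := by
  rw [mem_Icc] at hj₀m
  by_cases hmp : m ≤ p + 1
  · -- every sensor through `p + 1` starts no later than `j₀`, hence contains `m`
    refine (hA _ hp).trans (card_le_card fun i hi => ?_)
    have := hmax i hi
    simp only [stabbed, mem_filter, mem_Icc] at hi ⊢
    exact ⟨⟨hi.1, by omega⟩, by omega, by omega⟩
  · refine (hA m hm).trans (card_le_card fun i hi => ?_)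
    simp only [stabbed, mem_filter, mem_Icc] at hi ⊢
    exact ⟨⟨hi.1, by omega⟩, hi.2⟩

variable [DecidableEq ι]

theorem stabbed_insert_of_mem {j : ι} {m : ℕ} (D : Finset ι) (h : m ∈ Icc (L j) (R j)) :
    stabbed L R (insert j D) m = insert j (stabbed L R D m) := by
  rw [stabbed, filter_insert, if_pos h, stabbed]

theorem stabbed_insert_of_notMem {j : ι} {m : ℕ} (D : Finset ι) (h : m ∉ Icc (L j) (R j)) :
    stabbed L R (insert j D) m = stabbed L R D m := by
  rw [stabbed, filter_insert, if_neg h, stabbed]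

theorem exists_greedy_cover (K : ℕ) (A : Finset ι)
    (hA : ∀ m ∈ Icc 1 n, K + 1 ≤ #(stabbed L R A m)) (p : ℕ) :
    ∃ D ⊆ A, (∀ j ∈ D, p < R j) ∧
      (∀ m ∈ Icc 1 n, p < m → ∃ j ∈ D, m ∈ Icc (L j) (R j)) ∧
      ∀ m ∈ Icc 1 n, (stabbed L R D m).Nonempty →
        #(stabbed L R D m) + K ≤ #(stabbed L R {j ∈ A | p < R j} m) := by
  by_cases hpn : n ≤ p
  · refine ⟨∅, empty_subset A, by simp, fun m hm hpm => ?_, by simp [stabbed]⟩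
    simp only [mem_Icc] at hm
    omega
  have hp1 : p + 1 ∈ Icc 1 n := mem_Icc.2 ⟨by omega, by omega⟩
  have hne : (stabbed L R A (p + 1)).Nonempty := card_pos.1 (by have := hA _ hp1; omega)
  obtain ⟨j₀, hj₀, hmax⟩ := exists_max_image _ L hne
  obtain ⟨hj₀A, hj₀L, hj₀R⟩ : j₀ ∈ A ∧ L j₀ ≤ p + 1 ∧ p + 1 ≤ R j₀ := by
    simpa [stabbed] using hj₀
  have hR₀ : p < R j₀ := by omega
  obtain ⟨D, hDA, hDR, hDcov, hDcount⟩ := exists_greedy_cover K A hA (R j₀)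
  have hj₀D : j₀ ∉ D := fun h => (hDR j₀ h).false
  refine ⟨insert j₀ D, insert_subset hj₀A hDA, ?_, ?_, ?_⟩
  · simp only [mem_insert, forall_eq_or_imp]
    exact ⟨hR₀, fun j hj => hR₀.trans (hDR j hj)⟩
  · intro m hm hpm
    by_cases hmR : m ≤ R j₀
    · exact ⟨j₀, mem_insert_self _ _, mem_Icc.2 ⟨by omega, hmR⟩⟩
    · obtain ⟨j, hj, hjm⟩ := hDcov m hm (by omega)
      exact ⟨j, mem_insert_of_mem hj, hjm⟩
  intro m hm hDm
  have hmono : stabbed L R {j ∈ A | R j₀ < R j} m ⊆ stabbed L R {j ∈ A | p < R j} m :=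
    filter_subset_filter _ (monotone_filter_right _ fun j _ h => hR₀.trans h)
  by_cases hj₀m : m ∈ Icc (L j₀) (R j₀)
  swap
  · rw [stabbed_insert_of_notMem D hj₀m] at hDm ⊢
    exact (hDcount m hm hDm).trans (card_le_card hmono)
  rw [stabbed_insert_of_mem D hj₀m, card_insert_of_notMem (by simp [stabbed, hj₀D])]
  rcases (stabbed L R D m).eq_empty_or_nonempty with hDm' | hDm'
  · rw [hDm', card_empty, zero_add, add_comm]
    exact add_one_le_card_stabbed_of_forall_le_left hA hp1 hmax hm hj₀m
  · -- `j₀` is counted among the sensors reaching past `p` but not past `R j₀`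
    have hsub : insert j₀ (stabbed L R {j ∈ A | R j₀ < R j} m) ⊆
        stabbed L R {j ∈ A | p < R j} m :=
      insert_subset (by simpa [stabbed, hj₀A, hR₀] using hj₀m) hmono
    have := card_le_card hsub
    rw [card_insert_of_notMem (by simp [stabbed])] at this
    have := hDcount m hm hDm'
    omega
termination_by n - p

theorem exists_cover_le_card_stabbed_sdiff (K : ℕ) (A : Finset ι)
    (hA : ∀ m ∈ Icc 1 n, K + 1 ≤ #(stabbed L R A m)) :
    ∃ D ⊆ A, IsCover L R n D ∧ ∀ m ∈ Icc 1 n, K ≤ #(stabbed L R (A \ D) m) := by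
  obtain ⟨D, hDA, -, hDcov, hDcount⟩ := exists_greedy_cover K A hA 0
  refine ⟨D, hDA, fun m hm => hDcov m hm (mem_Icc.1 hm).1, fun m hm => ?_⟩
  have hsub : stabbed L R D m ⊆ stabbed L R A m := filter_subset_filter _ hDA
  have hsdiff : stabbed L R (A \ D) m = stabbed L R A m \ stabbed L R D m := by
    ext j
    simp only [stabbed, mem_filter, mem_sdiff]
    tauto
  rw [hsdiff, card_sdiff_of_subset hsub]
  rcases (stabbed L R D m).eq_empty_or_nonempty with hDm | hDm
  · have := hA m hm
    rw [hDm, card_empty]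
    omega
  · have hle : #(stabbed L R {j ∈ A | 0 < R j} m) ≤ #(stabbed L R A m) :=
      card_le_card (filter_subset_filter _ (filter_subset _ A))
    have := hDcount m hm hDm
    omega

theorem exists_disjoint_covers (K : ℕ) (A : Finset ι)
    (hA : ∀ m ∈ Icc 1 n, K ≤ #(stabbed L R A m)) :
    ∃ C : Fin K → Finset ι, (∀ a, C a ⊆ A) ∧ Pairwise (Disjoint on C) ∧
      ∀ a, IsCover L R n (C a) := by
  induction K generalizing A with
  | zero => exact ⟨Fin.elim0, fun a => a.elim0, fun a => a.elim0, fun a => a.elim0⟩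
  | succ K ih =>
    obtain ⟨D, hDA, hDcov, hrest⟩ := exists_cover_le_card_stabbed_sdiff K A hA
    obtain ⟨C, hCA, hCdisj, hCcov⟩ := ih (A \ D) hrest
    have hDC : ∀ b, Disjoint D (C b) := fun b => disjoint_sdiff.mono_right (hCA b)
    refine ⟨Fin.cons D C, Fin.cases hDA fun b => (hCA b).trans sdiff_subset, ?_,
      Fin.cases hDcov hCcov⟩
    intro a b hab
    cases a using Fin.cases <;> cases b using Fin.cases
    · exact absurd rfl hab
    · exact hDC _
    · exact (hDC _).symm
    · exact hCdisj (Fin.succ_injective _ |>.ne_iff.1 hab)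

variable [Fintype ι]

variable (L R) in
def mlcpValues (n : ℕ) : Set ℝ :=
  {x | ∃ t : Finset ι → ℝ, (∀ C, 0 ≤ t C) ∧ (∀ C, t C ≠ 0 → IsCover L R n C) ∧
    (∀ i : ι, ∑ C ∈ univ.filter (fun C : Finset ι => i ∈ C), t C ≤ 1) ∧ ∑ C, t C = x}

variable (L R) in
def dscpValues (n : ℕ) : Set ℝ :=
  {x | ∃ k : ℕ, x = k ∧ ∃ C : Fin k → Finset ι, Pairwise (Disjoint on C) ∧ ∀ a, IsCover L R n (C a)}

theorem sum_le_card_stabbed (m : ℕ) (t : Finset ι → ℝ) (ht : ∀ C, 0 ≤ t C)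
    (htcov : ∀ C, t C ≠ 0 → (stabbed L R C m).Nonempty)
    (hcap : ∀ i : ι, ∑ C ∈ univ.filter (fun C : Finset ι => i ∈ C), t C ≤ 1) :
    ∑ C, t C ≤ #(stabbed L R univ m) := by
  have hterm : ∀ C, t C ≤ ∑ _i ∈ stabbed L R C m, t C := by
    intro C
    by_cases hC : t C = 0
    · simp [hC]
    · obtain ⟨i, hi⟩ := htcov C hC
      exact single_le_sum (f := fun _ => t C) (fun _ _ => ht C) hi
  calc ∑ C, t C ≤ ∑ C, ∑ _i ∈ stabbed L R C m, t C := sum_le_sum fun C _ => hterm C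
    _ = ∑ i ∈ stabbed L R univ m, ∑ C ∈ univ.filter (fun C : Finset ι => i ∈ C), t C :=
        sum_comm' fun C i => by simp [stabbed]
    _ ≤ ∑ _i ∈ stabbed L R univ m, (1 : ℝ) := sum_le_sum fun i _ => hcap i
    _ = #(stabbed L R univ m) := by simp

theorem le_card_stabbed_of_mem_mlcpValues {m : ℕ} (hm : m ∈ Icc 1 n) {x : ℝ}
    (hx : x ∈ mlcpValues L R n) : x ≤ #(stabbed L R univ m) := by
  obtain ⟨t, ht, htcov, hcap, rfl⟩ := hx
  refine sum_le_card_stabbed m t ht (fun C hC => ?_) hcap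
  obtain ⟨i, hi, him⟩ := htcov C hC m hm
  exact ⟨i, mem_filter.2 ⟨hi, him⟩⟩

theorem dscpValues_subset_mlcpValues : dscpValues L R n ⊆ mlcpValues L R n := by
  rintro _ ⟨k, rfl, C, hdisj, hcov⟩
  refine ⟨fun X => ∑ a, if C a = X then 1 else 0, fun X => sum_nonneg fun a _ => by positivity,
    fun X hX => ?_, fun i => ?_, by rw [sum_comm]; simp⟩
  · obtain ⟨a, -, ha⟩ := exists_ne_zero_of_sum_ne_zero hX
    rw [← (ite_ne_right_iff.1 ha).1]
    exact hcov a
  · rw [sum_comm]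
    simp only [sum_ite_eq, mem_filter, mem_univ, true_and, sum_boole]
    exact_mod_cast card_le_one.2 fun a ha b hb => by
      by_contra hab
      exact disjoint_left.1 (hdisj hab) (mem_filter.1 ha).2 (mem_filter.1 hb).2

theorem natCast_mem_dscpValues {K : ℕ} (hK : ∀ m ∈ Icc 1 n, K ≤ #(stabbed L R univ m)) :
    (K : ℝ) ∈ dscpValues L R n := by
  obtain ⟨C, -, hdisj, hcov⟩ := exists_disjoint_covers K univ hK
  exact ⟨K, rfl, C, hdisj, hcov⟩

end IntervalSensors

open IntervalSensors

theorem stmt15_general {ι : Type*} [Fintype ι] [DecidableEq ι]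
    (n : ℕ) (hn : 1 ≤ n) (L R : ι → ℕ) :
    sSup {x : ℝ | ∃ t : Finset ι → ℝ,
        (∀ C, 0 ≤ t C) ∧
        (∀ C, t C ≠ 0 → ∀ m ∈ Finset.Icc 1 n, ∃ i ∈ C, m ∈ Finset.Icc (L i) (R i)) ∧
        (∀ i : ι, ∑ C ∈ Finset.univ.filter (fun C : Finset ι => i ∈ C), t C ≤ 1) ∧
        ∑ C : Finset ι, t C = x} =
    sSup {x : ℝ | ∃ k : ℕ, x = k ∧ ∃ C : Fin k → Finset ι,
        (∀ a b, a ≠ b → Disjoint (C a) (C b)) ∧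
        ∀ a, ∀ m ∈ Finset.Icc 1 n, ∃ i ∈ C a, m ∈ Finset.Icc (L i) (R i)} := by
  change sSup (mlcpValues L R n) = sSup (dscpValues L R n)
  obtain ⟨m₀, hm₀, hmin⟩ :=
    exists_min_image (Icc 1 n) (fun m => #(stabbed L R univ m)) (nonempty_Icc.2 hn)
  have hdscp : (#(stabbed L R univ m₀) : ℝ) ∈ dscpValues L R n := natCast_mem_dscpValues hmin
  have hbound : ∀ x ∈ mlcpValues L R n, x ≤ #(stabbed L R univ m₀) :=
    fun x hx => le_card_stabbed_of_mem_mlcpValues hm₀ hx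
  rw [IsGreatest.csSup_eq ⟨dscpValues_subset_mlcpValues hdscp, hbound⟩,
    IsGreatest.csSup_eq ⟨hdscp, fun x hx => hbound x (dscpValues_subset_mlcpValues hx)⟩]

/-- For interval sensors on a line (1-D case), the optimal value of the fractional
MLCP equals the maximum number of pairwise disjoint set covers (DSCP): the MLCP LP has
an integral optimal solution. -/
theorem stmt15 {ι : Type*} [Fintype ι] [DecidableEq ι]
    (n : ℕ) (hn : 1 ≤ n) (L R : ι → ℕ)
    (hLR : ∀ j, 1 ≤ L j ∧ L j ≤ R j ∧ R j ≤ n) :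
    sSup {x : ℝ | ∃ t : Finset ι → ℝ,
        (∀ C, 0 ≤ t C) ∧
        (∀ C, t C ≠ 0 → ∀ m ∈ Finset.Icc 1 n, ∃ i ∈ C, m ∈ Finset.Icc (L i) (R i)) ∧
        (∀ i : ι, ∑ C ∈ Finset.univ.filter (fun C : Finset ι => i ∈ C), t C ≤ 1) ∧
        ∑ C : Finset ι, t C = x} =
    sSup {x : ℝ | ∃ k : ℕ, x = k ∧ ∃ C : Fin k → Finset ι,
        (∀ a b, a ≠ b → Disjoint (C a) (C b)) ∧
        ∀ a, ∀ m ∈ Finset.Icc 1 n, ∃ i ∈ C a, m ∈ Finset.Icc (L i) (R i)} :=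
  stmt15_general n hn L R
end

section
/- In the graph G' obtained by the c-copy construction from G, a set of vertices D' ⊆ V(G') is a dominating set of G' if and only if its projection π(D') = {v : (v,i) ∈ D' for some i} is a dominating set of G; consequently, the domatic number of G' equals the maximum number of dominating sets of G such that each vertex of G is used in at most c of them (the c-domatic multi-partition number). -/
/-- The `c`-copy construction: `c` copies of each vertex of `G`, a clique on the copies
of each vertex, and a complete bipartite graph between copies of adjacent vertices. -/
def copyGraph {V : Type*} (G : SimpleGraph V) (c : ℕ) : SimpleGraph (V × Fin c) where
  Adj x y := (x.1 = y.1 ∧ x.2 ≠ y.2) ∨ G.Adj x.1 y.1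
  symm := by
    constructor
    intro x y h
    rcases h with ⟨h1, h2⟩ | h
    · exact Or.inl ⟨h1.symm, h2.symm⟩
    · exact Or.inr (G.symm.symm _ _ h)
  loopless := by
    constructor
    intro x h
    rcases h with ⟨_, h2⟩ | h
    · exact h2 rfl
    · exact G.loopless.irrefl _ h

/-!
Copies of a vertex form a clique, so any copy of `v` in `D'` dominates all copies of `v`, and any
copy of a neighbour of `v` does too; hence `D'` dominates `G'` exactly when its projection
dominates `G`. Disjoint dominating sets of `G'` therefore project to dominating sets of `G` in
which every vertex lies at most `c` times, since distinct sets containing `v` use distinct copies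
of `v`. Conversely, a family of multiplicity at most `c` lifts to a disjoint family by giving each
set containing `v` its own copy of `v`.
-/

open Function

namespace Set

theorem mem_fst_image_iff {α β : Type*} {s : Set (α × β)} {a : α} :
    a ∈ Prod.fst '' s ↔ ∃ b, (a, b) ∈ s := by
  simp

theorem ncard_setOf_mem_fst_image_le {ι α β : Type*} [Finite β] {D' : ι → Set (α × β)}
    (hD' : Pairwise (Disjoint on D')) (v : α) :
    {a | v ∈ Prod.fst '' D' a}.ncard ≤ Nat.card β := by
  simp only [mem_fst_image_iff]
  choose f hf using fun a : {a | ∃ i, (v, i) ∈ D' a} => a.2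
  have hf_inj : Injective f := fun a b hab => by
    by_contra hne
    exact (hD' (Subtype.coe_ne_coe.mpr hne)).le_bot ⟨hf a, hab ▸ hf b⟩
  exact (Nat.card_coe_set_eq _).symm.trans_le (Nat.card_le_card_of_injective f hf_inj)

theorem exists_pairwise_disjoint_fst_image_eq {ι α : Type*} [Finite ι] {c : ℕ}
    (D : ι → Set α) (hD : ∀ v, {a | v ∈ D a}.ncard ≤ c) :
    ∃ D' : ι → Set (α × Fin c),
      Pairwise (Disjoint on D') ∧ ∀ a, Prod.fst '' D' a = D a := by
  have slots (v : α) : Nonempty ({a // v ∈ D a} ↪ Fin c) := by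
    have := Fintype.ofFinite {a // v ∈ D a}
    refine Embedding.nonempty_of_card_le ?_
    rw [Fintype.card_fin, ← Nat.card_eq_fintype_card]
    exact (Nat.card_coe_set_eq _).trans_le (hD v)
  let g v := (slots v).some
  refine ⟨fun a => {x | ∃ h : x.1 ∈ D a, g x.1 ⟨a, h⟩ = x.2}, ?_, fun a => ?_⟩
  · intro a b hab
    rw [onFun, Set.disjoint_left]
    rintro ⟨v, i⟩ ⟨ha, hga⟩ ⟨hb, hgb⟩
    exact hab (congrArg Subtype.val ((g v).injective (hga.trans hgb.symm)))
  · ext v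
    simp only [mem_fst_image_iff, mem_ofPred_eq]
    exact ⟨fun ⟨_, h, _⟩ => h, fun h => ⟨g v ⟨a, h⟩, h, rfl⟩⟩

end Set

namespace SimpleGraph

variable {V : Type*}

def IsDominating (G : SimpleGraph V) (D : Set V) : Prop :=
  ∀ v, v ∈ D ∨ ∃ u ∈ D, G.Adj v u

theorem isDominating_copyGraph_iff (G : SimpleGraph V) {c : ℕ} (hc : 0 < c)
    (D' : Set (V × Fin c)) :
    (copyGraph G c).IsDominating D' ↔ G.IsDominating (Prod.fst '' D') := by
  constructor
  · intro h v
    rcases h (v, ⟨0, hc⟩) with hv | ⟨y, hy, (⟨rfl, -⟩ | hadj)⟩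
    · exact Or.inl ⟨_, hv, rfl⟩
    · exact Or.inl ⟨y, hy, rfl⟩
    · exact Or.inr ⟨y.1, ⟨y, hy, rfl⟩, hadj⟩
  · rintro h ⟨v, i⟩
    rcases h v with ⟨⟨_, j⟩, hj, rfl⟩ | ⟨_, ⟨⟨u, j⟩, hj, rfl⟩, hadj⟩
    · by_cases hji : j = i
      · exact Or.inl (hji ▸ hj)
      · exact Or.inr ⟨_, hj, Or.inl ⟨rfl, Ne.symm hji⟩⟩
    · exact Or.inr ⟨_, hj, Or.inr hadj⟩

end SimpleGraph

/-- A set `D'` of vertices of the `c`-copy graph `G'` is dominating iff its projection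
to `G` is dominating; consequently, for every `k`, `G'` has `k` pairwise disjoint
dominating sets iff `G` has `k` dominating sets with every vertex used in at most `c`
of them (the `c`-domatic multi-partition number equals the domatic number of `G'`). -/
theorem stmt18 {V : Type*} (G : SimpleGraph V) (c : ℕ) (hc : 1 ≤ c) :
    (∀ D' : Set (V × Fin c),
      ((∀ x : V × Fin c, x ∈ D' ∨ ∃ y ∈ D', (copyGraph G c).Adj x y) ↔
        (∀ v : V, (∃ i, (v, i) ∈ D') ∨ ∃ u, (∃ i, (u, i) ∈ D') ∧ G.Adj v u))) ∧
    (∀ k : ℕ,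
      (∃ D' : Fin k → Set (V × Fin c),
        (∀ a b, a ≠ b → Disjoint (D' a) (D' b)) ∧
        ∀ a, ∀ x : V × Fin c, x ∈ D' a ∨ ∃ y ∈ D' a, (copyGraph G c).Adj x y) ↔
      (∃ D : Fin k → Set V,
        (∀ a, ∀ v : V, v ∈ D a ∨ ∃ u ∈ D a, G.Adj v u) ∧
        ∀ v : V, {a : Fin k | v ∈ D a}.ncard ≤ c)) := by
  refine ⟨fun D' => ?_, fun k => ⟨?_, ?_⟩⟩
  · simpa only [SimpleGraph.IsDominating, Set.mem_fst_image_iff] using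
      G.isDominating_copyGraph_iff hc D'
  · rintro ⟨D', hdisj, hdom⟩
    refine ⟨fun a => Prod.fst '' D' a, fun a => (G.isDominating_copyGraph_iff hc _).1 (hdom a),
      fun v => ?_⟩
    exact (Set.ncard_setOf_mem_fst_image_le (fun a b hab => hdisj a b hab) v).trans_eq
      (Nat.card_fin c)
  · rintro ⟨D, hdom, hcard⟩
    obtain ⟨D', hdisj, hproj⟩ := Set.exists_pairwise_disjoint_fst_image_eq D hcard
    refine ⟨D', fun a b hab => hdisj hab, fun a => (G.isDominating_copyGraph_iff hc _).2 ?_⟩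
    rw [hproj]
    exact hdom a
end
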